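/- (Theorem 5.1, abstract form.) Let ρ be an ordinal, a ∈ X, m : ℕ → ℕ strictly increasing, and y : ℕ → X a sequence with d (y n) a = ω^ρ · (m n) for all n ∈ ℕ (such a sequence exists whenever the enlargement has a ρ-hypernode outside the principal ρ-galaxy). Then there exists a two-way infinite family w : ℤ → (ℕ → X) of sequences such that: (i) for every k ∈ ℤ, the sequence w k is not ρ-limitedly distant from the constant sequence at a; (ii) for all k, l ∈ ℤ with k < l and every μ ∈ ℕ, {n : d (w k n) a ♯ ω^ρ · μ ≤ d (w l n) a} ∈ F; consequently (iii) for k ≠ l the sequences w k and w l are not ρ-limitedly distant. Hence there is a two-way infinite sequence of distinct ρ-galaxies, none of them the principal one, totally ordered according to their closeness to the principal ρ-galaxy. -/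

import Mathlib

open Filter Ordinal
open scoped Ordinal

universe u

namespace Ordinal

/-- Natural (Hessenberg) addition of ordinals, as `Ordinal.nadd` was defined in Mathlib
(December 2024); it is no longer in Mathlib. -/
noncomputable def nadd : Ordinal.{u} → Ordinal.{u} → Ordinal.{u}
  | a, b =>
    max (blsub.{u, u} a fun a' _ => nadd a' b) (blsub.{u, u} b fun b' _ => nadd a b')
termination_by o₁ o₂ => (o₁, o₂)

end Ordinal

infixl:65 " ♯ " => Ordinal.nadd

/-- Sequences `x, y : ℕ → X` are `ρ`-limitedly distant if there exists `μ ∈ ℕ` with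
`{n : d (x n) (y n) ≤ ω^ρ · μ} ∈ F`. -/
def LimitedlyDistant {X : Type*} (d : X → X → Ordinal) (F : Ultrafilter ℕ)
    (ρ : Ordinal) (x y : ℕ → X) : Prop :=
  ∃ μ : ℕ, {n : ℕ | d (x n) (y n) ≤ ω ^ ρ * μ} ∈ F


/-!
Write `γ = ω ^ ρ`. The set of ordinals below `γ` is closed under natural addition, and
consequently natural addition on ordinals `γ * i + r` with `i : ℕ` and `r < γ` adds the
coefficients `i`, so `γ * p ♯ γ * q ≤ γ * (p + q)`. Taking `w k n = y (n * (n + k))`, the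
points `w k n` lie at distance `γ * m (n * (n + k))` from `a`, and for `k < l` the coefficients
of `w k n` and `w l n` drift apart by at least `n`, because `m` is strictly increasing. This
gives the closeness relation (ii); by the triangle inequality, galaxies that are strictly
ordered by closeness are distinct, which gives (iii), and (i) holds because the coefficients
tend to infinity.
-/

namespace Ordinal

theorem lt_nadd_iff {a b c : Ordinal.{u}} :
    a < b ♯ c ↔ (∃ b' < b, a ≤ b' ♯ c) ∨ ∃ c' < c, a ≤ b ♯ c' := by
  rw [nadd]; simp [lt_blsub_iff]

theorem nadd_le_iff {a b c : Ordinal.{u}} :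
    b ♯ c ≤ a ↔ (∀ b' < b, b' ♯ c < a) ∧ ∀ c' < c, b ♯ c' < a := by
  rw [nadd]; simp [blsub_le_iff]

theorem nadd_lt_nadd_left {b c : Ordinal.{u}} (h : b < c) (a : Ordinal.{u}) : a ♯ b < a ♯ c :=
  lt_nadd_iff.2 (Or.inr ⟨b, h, le_rfl⟩)

theorem nadd_lt_nadd_right {b c : Ordinal.{u}} (h : b < c) (a : Ordinal.{u}) : b ♯ a < c ♯ a :=
  lt_nadd_iff.2 (Or.inl ⟨b, h, le_rfl⟩)

theorem le_of_nadd_le_nadd_left {a b c : Ordinal.{u}} (h : a ♯ b ≤ a ♯ c) : b ≤ c :=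
  not_lt.1 fun h' => h.not_gt (nadd_lt_nadd_left h' a)

@[simp]
theorem zero_nadd_zero : (0 : Ordinal.{u}) ♯ 0 = 0 :=
  nonpos_iff_eq_zero.1 <| nadd_le_iff.2 ⟨by simp, by simp⟩

theorem exists_eq_mul_natCast_add {γ a o : Ordinal} (hγ : γ ≠ 0) (ha : a < γ * o) (ho : o ≤ ω) :
    ∃ i : ℕ, (i : Ordinal) < o ∧ ∃ r < γ, a = γ * i + r := by
  have hdiv : a / γ < o := (lt_mul_iff_div_lt hγ).1 ha
  obtain ⟨i, hi⟩ := lt_omega0.1 (hdiv.trans_le ho)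
  exact ⟨i, hi ▸ hdiv, a % γ, mod_lt a hγ, hi ▸ (div_add_mod a γ).symm⟩

theorem mul_natCast_add_lt_mul_natCast {γ r : Ordinal} {i k : ℕ} (hik : i < k) (hr : r < γ) :
    γ * i + r < γ * k :=
  calc γ * i + r < γ * (i + 1 : ℕ) := by
        push_cast; rw [mul_add_one]; exact add_lt_add_right hr _
    _ ≤ γ * k := mul_le_mul_right (Nat.cast_le.2 hik) _

theorem lt_mul_natCast_add_cases {γ a r : Ordinal} {i : ℕ} (hr : r < γ) (ha : a < γ * i + r) :
    (∃ r' < r, a = γ * i + r') ∨ ∃ i' < i, ∃ r' < γ, a = γ * i' + r' := by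
  obtain ⟨i', hi', r', hr', rfl⟩ := exists_eq_mul_natCast_add hr.ne_bot
    (ha.trans (mul_natCast_add_lt_mul_natCast i.lt_succ_self hr)) (natCast_lt_omega0 _).le
  rcases (Nat.lt_succ_iff.1 (Nat.cast_lt.1 hi')).lt_or_eq with h | rfl
  · exact Or.inr ⟨i', h, r', hr', rfl⟩
  · exact Or.inl ⟨r', (add_lt_add_iff_left _).1 ha, rfl⟩

theorem mul_natCast_add_nadd_mul_natCast_add_le {γ r s : Ordinal.{u}}
    (hγ : IsPrincipal (· ♯ ·) γ) (hr : r < γ) (hs : s < γ) (i j : ℕ) :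
    (γ * i + r) ♯ (γ * j + s) ≤ γ * (i + j : ℕ) + (r ♯ s) := by
  suffices H : ∀ a b : Ordinal.{u}, ∀ (i j : ℕ) (r s : Ordinal.{u}), r < γ → s < γ →
      a = γ * i + r → b = γ * j + s → a ♯ b ≤ γ * (i + j : ℕ) + (r ♯ s) from
    H _ _ i j r s hr hs rfl rfl
  intro a
  induction a using WellFoundedLT.induction with | _ a iha => ?_
  intro b
  induction b using WellFoundedLT.induction with | _ b ihb => ?_
  rintro i j r s hr hs rfl rfl
  have absorb {i' k : ℕ} {t : Ordinal.{u}} (hik : i' < k) (ht : t < γ) :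
      γ * i' + t < γ * k + (r ♯ s) :=
    (mul_natCast_add_lt_mul_natCast hik ht).trans_le le_self_add
  refine nadd_le_iff.2 ⟨fun a' ha' => ?_, fun b' hb' => ?_⟩
  · rcases lt_mul_natCast_add_cases hr ha' with ⟨r', hr', rfl⟩ | ⟨i', hi', r', hr', rfl⟩
    · exact (iha _ ha' _ i j r' s (hr'.trans hr) hs rfl rfl).trans_lt
        (add_lt_add_right (nadd_lt_nadd_right hr' s) _)
    · exact (iha _ ha' _ i' j r' s hr' hs rfl rfl).trans_lt (absorb (by omega) (hγ hr' hs))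
  · rcases lt_mul_natCast_add_cases hs hb' with ⟨s', hs', rfl⟩ | ⟨j', hj', s', hs', rfl⟩
    · exact (ihb _ hb' i j r s' hr (hs'.trans hs) rfl rfl).trans_lt
        (add_lt_add_right (nadd_lt_nadd_left hs' r) _)
    · exact (ihb _ hb' i j' r s' hr hs' rfl rfl).trans_lt (absorb (by omega) (hγ hr hs'))

theorem isPrincipal_nadd_omega0_opow (ρ : Ordinal.{u}) : IsPrincipal (· ♯ ·) (ω ^ ρ) := by
  induction ρ using limitRecOn with
  | zero =>
    intro a b ha hb
    simp_all
  | add_one t ih =>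
    intro a b ha hb
    have hγ : ω ^ t ≠ 0 := opow_ne_zero t omega0_ne_zero
    rw [opow_add_one] at ha hb ⊢
    obtain ⟨i, -, r, hr, rfl⟩ := exists_eq_mul_natCast_add hγ ha le_rfl
    obtain ⟨j, -, s, hs, rfl⟩ := exists_eq_mul_natCast_add hγ hb le_rfl
    calc (ω ^ t * i + r) ♯ (ω ^ t * j + s) ≤ ω ^ t * (i + j : ℕ) + (r ♯ s) :=
          mul_natCast_add_nadd_mul_natCast_add_le ih hr hs i j
      _ < ω ^ t * (i + j + 1 : ℕ) := mul_natCast_add_lt_mul_natCast (by omega) (ih hr hs)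
      _ < ω ^ t * ω := (mul_lt_mul_iff_right₀ (opow_pos t omega0_pos)).2 (natCast_lt_omega0 _)
  | limit ρ hρ ih =>
    intro a b ha hb
    obtain ⟨s, hs, has⟩ := (lt_opow_of_isSuccLimit omega0_ne_zero hρ).1 ha
    obtain ⟨t, ht, hbt⟩ := (lt_opow_of_isSuccLimit omega0_ne_zero hρ).1 hb
    have hmono : Monotone (ω ^ · : Ordinal.{u} → Ordinal.{u}) :=
      fun _ _ => opow_le_opow_right omega0_pos
    exact (ih _ (max_lt hs ht) (has.trans_le (hmono (le_max_left s t)))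
      (hbt.trans_le (hmono (le_max_right s t)))).trans_le (hmono (max_lt hs ht).le)

theorem omega0_opow_mul_nadd_le (ρ : Ordinal.{u}) {p q r : ℕ} (h : p + q ≤ r) :
    ω ^ ρ * p ♯ ω ^ ρ * q ≤ ω ^ ρ * r := by
  have hpos : 0 < ω ^ ρ := opow_pos ρ omega0_pos
  calc ω ^ ρ * p ♯ ω ^ ρ * q = (ω ^ ρ * p + 0) ♯ (ω ^ ρ * q + 0) := by simp only [add_zero]
    _ ≤ ω ^ ρ * (p + q : ℕ) + (0 ♯ 0) :=
        mul_natCast_add_nadd_mul_natCast_add_le (isPrincipal_nadd_omega0_opow ρ) hpos hpos p q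
    _ ≤ ω ^ ρ * r := by
        rw [zero_nadd_zero, add_zero]; exact mul_le_mul_right (Nat.cast_le.2 h) _

theorem omega0_opow_mul_natCast_lt (ρ : Ordinal.{u}) {p q : ℕ} (h : p < q) :
    ω ^ ρ * p < ω ^ ρ * q :=
  (mul_lt_mul_iff_right₀ (opow_pos ρ omega0_pos)).2 (Nat.cast_lt.2 h)

end Ordinal

theorem StrictMono.eventually_add_le_apply_toNat_mul_add {m : ℕ → ℕ} (hm : StrictMono m)
    {k l : ℤ} (hkl : k < l) (μ : ℕ) :
    ∀ᶠ n : ℕ in atTop, m ((n * (n + k) : ℤ).toNat) + μ ≤ m ((n * (n + l) : ℤ).toNat) := by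
  filter_upwards [eventually_ge_atTop (k.natAbs + μ)] with n hn
  have hgap : n + ((n : ℤ) * (n + k)).toNat ≤ ((n : ℤ) * (n + l)).toNat := by
    have h0 : 0 ≤ (n : ℤ) * (n + k) := mul_nonneg (by omega) (by omega)
    have h1 : (n : ℤ) * (n + k) + n ≤ n * (n + l) := by nlinarith
    omega
  calc m ((n * (n + k) : ℤ).toNat) + μ ≤ n + m ((n * (n + k) : ℤ).toNat) := by omega
    _ ≤ m (n + ((n : ℤ) * (n + k)).toNat) := hm.add_le_nat n _
    _ ≤ m ((n * (n + l) : ℤ).toNat) := hm.monotone hgap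

section Galaxies

variable {X : Type*} {d : X → X → Ordinal.{u}} {F : Ultrafilter ℕ} {ρ : Ordinal.{u}}

def IsCloserToPrincipalGalaxy (d : X → X → Ordinal.{u}) (F : Ultrafilter ℕ) (ρ : Ordinal.{u})
    (x u v : ℕ → X) : Prop :=
  ∀ μ : ℕ, {n | d (u n) (x n) ♯ ω ^ ρ * μ ≤ d (v n) (x n)} ∈ F

theorem LimitedlyDistant.symm (hdsymm : ∀ a b : X, d a b = d b a) {u v : ℕ → X}
    (h : LimitedlyDistant d F ρ u v) : LimitedlyDistant d F ρ v u := by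
  obtain ⟨μ, hμ⟩ := h
  exact ⟨μ, by simpa only [hdsymm] using hμ⟩

theorem not_limitedlyDistant_of_forall_lt {u v : ℕ → X}
    (h : ∀ μ : ℕ, {n | ω ^ ρ * μ < d (u n) (v n)} ∈ F) : ¬ LimitedlyDistant d F ρ u v := by
  rintro ⟨μ, hμ⟩
  obtain ⟨n, hle, hlt⟩ : ∃ n, d (u n) (v n) ≤ ω ^ ρ * μ ∧ ω ^ ρ * μ < d (u n) (v n) :=
    (Eventually.and hμ (h μ)).exists
  exact hle.not_gt hlt

theorem IsCloserToPrincipalGalaxy.not_limitedlyDistant (hdsymm : ∀ a b : X, d a b = d b a)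
    (hdtri : ∀ a b c : X, d a c ≤ d a b ♯ d b c) {x u v : ℕ → X}
    (h : IsCloserToPrincipalGalaxy d F ρ x u v) : ¬ LimitedlyDistant d F ρ u v := by
  refine not_limitedlyDistant_of_forall_lt fun μ => ?_
  filter_upwards [h (μ + 1)] with n hn
  have hle : d (u n) (x n) ♯ ω ^ ρ * (μ + 1 : ℕ) ≤ d (u n) (x n) ♯ d (u n) (v n) :=
    calc _ ≤ d (v n) (x n) := hn
      _ = d (x n) (v n) := hdsymm _ _
      _ ≤ d (x n) (u n) ♯ d (u n) (v n) := hdtri _ _ _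
      _ = d (u n) (x n) ♯ d (u n) (v n) := by rw [hdsymm (x n)]
  exact (omega0_opow_mul_natCast_lt ρ μ.lt_succ_self).trans_le (le_of_nadd_le_nadd_left hle)

end Galaxies

theorem exists_two_way_infinite_sequence_of_galaxies_general
    (X : Type*) (d : X → X → Ordinal)
    (hdsymm : ∀ a b : X, d a b = d b a)
    (hdtri : ∀ a b c : X, d a c ≤ d a b ♯ d b c)
    (F : Ultrafilter ℕ) (hF : ∀ s : Set ℕ, sᶜ.Finite → s ∈ F)
    (ρ : Ordinal) (a : X) (m : ℕ → ℕ) (hm : StrictMono m)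
    (y : ℕ → X) (hy : ∀ n : ℕ, d (y n) a = ω ^ ρ * (m n)) :
    ∃ w : ℤ → ℕ → X,
      (∀ k : ℤ, ¬ LimitedlyDistant d F ρ (w k) (fun _ => a)) ∧
      (∀ k l : ℤ, k < l → ∀ μ : ℕ,
        {n : ℕ | d (w k n) a ♯ ω ^ ρ * μ ≤ d (w l n) a} ∈ F) ∧
      (∀ k l : ℤ, k ≠ l → ¬ LimitedlyDistant d F ρ (w k) (w l)) := by
  have hF' : ∀ {s : Set ℕ}, s ∈ atTop → s ∈ F := fun {s} hs =>
    hF s (mem_cofinite.1 (Nat.cofinite_eq_atTop ▸ hs))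
  set w : ℤ → ℕ → X := fun k n => y ((n * (n + k) : ℤ).toNat)
  have hcloser : ∀ k l, k < l → IsCloserToPrincipalGalaxy d F ρ (fun _ => a) (w k) (w l) :=
    fun k l hkl μ => hF' <| (hm.eventually_add_le_apply_toNat_mul_add hkl μ).mono fun n hn => by
      simp only [w, hy]
      exact omega0_opow_mul_nadd_le ρ hn
  refine ⟨w, fun k => not_limitedlyDistant_of_forall_lt fun μ => ?_, hcloser, fun k l hkl => ?_⟩
  · filter_upwards [hF' (hm.eventually_add_le_apply_toNat_mul_add (sub_one_lt k) (μ + 1))]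
      with n hn
    simp only [w, hy]
    exact omega0_opow_mul_natCast_lt ρ (by omega)
  · rcases hkl.lt_or_gt with h | h
    · exact (hcloser k l h).not_limitedlyDistant hdsymm hdtri
    · exact fun hlk => (hcloser l k h).not_limitedlyDistant hdsymm hdtri (hlk.symm hdsymm)

theorem exists_two_way_infinite_sequence_of_galaxies
    (X : Type*) (d : X → X → Ordinal)
    (hd0 : ∀ a b : X, d a b = 0 ↔ a = b)
    (hdsymm : ∀ a b : X, d a b = d b a)
    (hdtri : ∀ a b c : X, d a c ≤ d a b ♯ d b c)
    (F : Ultrafilter ℕ) (hF : ∀ s : Set ℕ, sᶜ.Finite → s ∈ F)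
    (ρ : Ordinal) (a : X) (m : ℕ → ℕ) (hm : StrictMono m)
    (y : ℕ → X) (hy : ∀ n : ℕ, d (y n) a = ω ^ ρ * (m n)) :
    ∃ w : ℤ → ℕ → X,
      (∀ k : ℤ, ¬ LimitedlyDistant d F ρ (w k) (fun _ => a)) ∧
      (∀ k l : ℤ, k < l → ∀ μ : ℕ,
        {n : ℕ | d (w k n) a ♯ ω ^ ρ * μ ≤ d (w l n) a} ∈ F) ∧
      (∀ k l : ℤ, k ≠ l → ¬ LimitedlyDistant d F ρ (w k) (w l)) :=
  exists_two_way_infinite_sequence_of_galaxies_general X d hdsymm hdtri F hF ρ a m hm y hy
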